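/- arXiv:math/0410113 — 2 statements merged into one kernel-verified Lean document; each statement's English description precedes it below -/
import Mathlib

section
/- Let λ ∈ ℝ, let S be a strongly continuous, positive, λ-contractive semigroup on C(E) with generator G, and let h ∈ D(G) satisfy h(x) > 0 for all x ∈ E. Then S_t h ≤ e^{t‖(Gh)/h‖} h pointwise on E, for all t ≥ 0. -/
open Filter Topology Set MeasureTheory

variable {E : Type*} [TopologicalSpace E] [CompactSpace E] [TopologicalSpace.MetrizableSpace E] [Nonempty E]

/-- `S` is a semigroup of bounded linear operators on `C(E, ℝ)`:
`S 0 = id` and `S (s+t) = S s ∘ S t` for `s, t ≥ 0`. -/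
def IsSemigroupOn (S : ℝ → C(E, ℝ) →L[ℝ] C(E, ℝ)) : Prop :=
  S 0 = ContinuousLinearMap.id ℝ C(E, ℝ) ∧
    ∀ s t : ℝ, 0 ≤ s → 0 ≤ t → S (s + t) = (S s).comp (S t)

/-- Strong continuity: `‖S t f - f‖ → 0` as `t ↓ 0`, for every `f`. -/
def StronglyContinuousSG (S : ℝ → C(E, ℝ) →L[ℝ] C(E, ℝ)) : Prop :=
  ∀ f : C(E, ℝ), Tendsto (fun t : ℝ => S t f) (𝓝[>] (0 : ℝ)) (𝓝 f)

/-- Positivity: `f ≥ 0` implies `S t f ≥ 0` for all `t ≥ 0`. -/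
def PositiveSG (S : ℝ → C(E, ℝ) →L[ℝ] C(E, ℝ)) : Prop :=
  ∀ t : ℝ, 0 ≤ t → ∀ f : C(E, ℝ), 0 ≤ f → 0 ≤ S t f

/-- `l`-contractivity: `‖S t f‖ ≤ exp (l * t) * ‖f‖` for all `t ≥ 0`. -/
def ContractiveSG (l : ℝ) (S : ℝ → C(E, ℝ) →L[ℝ] C(E, ℝ)) : Prop :=
  ∀ t : ℝ, 0 ≤ t → ∀ f : C(E, ℝ), ‖S t f‖ ≤ Real.exp (l * t) * ‖f‖

/-- `(D, G)` is the generator of `S`: for `f ∈ D`, `t⁻¹ • (S t f - f) → G f` as `t ↓ 0`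
(in supremum norm), and `D` consists exactly of those `f` for which this limit exists. -/
def IsGeneratorOf (S : ℝ → C(E, ℝ) →L[ℝ] C(E, ℝ)) (D : Set C(E, ℝ))
    (G : C(E, ℝ) → C(E, ℝ)) : Prop :=
  (∀ f ∈ D, Tendsto (fun t : ℝ => t⁻¹ • (S t f - f)) (𝓝[>] (0 : ℝ)) (𝓝 (G f))) ∧
    ∀ f : C(E, ℝ),
      (∃ g : C(E, ℝ), Tendsto (fun t : ℝ => t⁻¹ • (S t f - f)) (𝓝[>] (0 : ℝ)) (𝓝 g)) → f ∈ D

/-- A Feller semigroup: strongly continuous positive semigroup with `S t 1 = 1`. -/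
def IsFellerSG (S : ℝ → C(E, ℝ) →L[ℝ] C(E, ℝ)) : Prop :=
  IsSemigroupOn S ∧ StronglyContinuousSG S ∧ PositiveSG S ∧ ∀ t : ℝ, 0 ≤ t → S t 1 = 1

/-- A mild solution of `∂u/∂t = G u + b u - a u²`, `u 0 = f`, relative to the semigroup `S`:
a continuous map `u : [0,∞) → C(E,ℝ)` with
`u t = S t f + ∫₀ᵗ S (t-s) (b * u s - a * (u s)²) ds` for all `t ≥ 0`. -/
def IsMildSolution (S : ℝ → C(E, ℝ) →L[ℝ] C(E, ℝ)) (a b f : C(E, ℝ))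
    (u : ℝ → C(E, ℝ)) : Prop :=
  ContinuousOn u (Ici 0) ∧
    ∀ t : ℝ, 0 ≤ t → u t = S t f + ∫ s in (0 : ℝ)..t, S (t - s) (b * u s - a * u s ^ 2)

/-!
Write `c = ‖Gh/h‖`, so that `Gh ≤ c • h`. For fixed `x`, the function `u t = (S t h) x` is
continuous on `[0, ∞)` (semigroup law, the exponential bound on `‖S t‖`, and right continuity
at `0`, which `h ∈ D(G)` already forces) and has right derivative `(S t (Gh)) x`, which by
positivity is at most `c * u t`. Grönwall's inequality gives `u t ≤ exp (t * c) * h x`.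
-/

theorem le_mul_exp_of_deriv_right_le {f f' : ℝ → ℝ} {K T : ℝ} (hT : 0 ≤ T)
    (hf : ContinuousOn f (Icc 0 T))
    (hf' : ∀ s ∈ Ico 0 T, HasDerivWithinAt f (f' s) (Ici s) s)
    (hbound : ∀ s ∈ Ico 0 T, f' s ≤ K * f s) :
    f T ≤ Real.exp (T * K) * f 0 := by
  have hgronwall := le_gronwallBound_of_liminf_deriv_right_le hf
    (fun s hs _ hr => (hf' s hs).liminf_right_slope_le hr) le_rfl
    (fun s hs => (hbound s hs).trans_eq (add_zero _).symm) T ⟨hT, le_rfl⟩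
  rwa [gronwallBound_ε0, sub_zero, mul_comm, mul_comm K] at hgronwall

theorem ContinuousMap.apply_le_norm_mul {X : Type*} [TopologicalSpace X] [CompactSpace X]
    {f q h : C(X, ℝ)} (hh : 0 ≤ h) (hf : ∀ x, f x = q x * h x) (x : X) :
    f x ≤ ‖q‖ * h x := by
  rw [hf]
  exact mul_le_mul_of_nonneg_right ((le_abs_self _).trans (q.norm_coe_le_norm x)) (hh x)

theorem tendsto_orbit_of_tendsto_difference_quotient {F : Type*} [NormedAddCommGroup F]
    [NormedSpace ℝ F] {S : ℝ → F →L[ℝ] F} {f g : F}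
    (hg : Tendsto (fun t : ℝ => t⁻¹ • (S t f - f)) (𝓝[>] 0) (𝓝 g)) :
    Tendsto (fun t => S t f) (𝓝[>] 0) (𝓝 f) := by
  have hlim : Tendsto (fun t : ℝ => f + t • (t⁻¹ • (S t f - f))) (𝓝[>] 0) (𝓝 (f + (0 : ℝ) • g)) :=
    tendsto_const_nhds.add ((tendsto_nhdsWithin_of_tendsto_nhds tendsto_id).smul hg)
  rw [zero_smul, add_zero] at hlim
  refine hlim.congr' ?_
  filter_upwards [self_mem_nhdsWithin] with t (ht : 0 < t)
  rw [smul_inv_smul₀ ht.ne', add_sub_cancel]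

section Semigroup

variable {X : Type*} [TopologicalSpace X] {S : ℝ → C(X, ℝ) →L[ℝ] C(X, ℝ)}

theorem IsSemigroupOn.apply_sub_apply (hsg : IsSemigroupOn S) {t u : ℝ} (ht : 0 ≤ t)
    (htu : t ≤ u) (f : C(X, ℝ)) : S u f - S t f = S t (S (u - t) f - f) := by
  rw [map_sub, ← ContinuousLinearMap.comp_apply, ← hsg.2 t (u - t) ht (sub_nonneg.2 htu),
    add_sub_cancel]

theorem PositiveSG.monotone (hpos : PositiveSG S) {t : ℝ} (ht : 0 ≤ t) {f g : C(X, ℝ)}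
    (hfg : f ≤ g) : S t f ≤ S t g := by
  simpa using hpos t ht (g - f) (sub_nonneg.2 hfg)

variable [CompactSpace X]

theorem hasDerivWithinAt_orbit (hsg : IsSemigroupOn S) {f g : C(X, ℝ)}
    (hg : Tendsto (fun t : ℝ => t⁻¹ • (S t f - f)) (𝓝[>] 0) (𝓝 g)) {t : ℝ} (ht : 0 ≤ t) :
    HasDerivWithinAt (fun u => S u f) (S t g) (Ici t) t := by
  rw [hasDerivWithinAt_iff_tendsto_slope, Ici_sdiff_left]
  have hshift : Tendsto (· - t) (𝓝[>] t) (𝓝[>] 0) := by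
    rw [← sub_self t]
    exact map_subRight_nhdsGT.le
  refine (((S t).continuous.tendsto g).comp (hg.comp hshift)).congr' ?_
  filter_upwards [self_mem_nhdsWithin] with u (hu : t < u)
  rw [Function.comp_apply, Function.comp_apply, map_smul, ← hsg.apply_sub_apply ht hu.le,
    slope_def_module]

theorem ContractiveSG.norm_apply_le {l : ℝ} (hcon : ContractiveSG l S) {s M : ℝ} (hs : 0 ≤ s)
    (hsM : s ≤ M) (f : C(X, ℝ)) : ‖S s f‖ ≤ Real.exp (|l| * M) * ‖f‖ := by
  refine (hcon s hs f).trans (mul_le_mul_of_nonneg_right (Real.exp_le_exp.2 ?_) (norm_nonneg f))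
  nlinarith [le_abs_self l, abs_nonneg l]

theorem norm_orbit_sub_le {l : ℝ} (hsg : IsSemigroupOn S) (hcon : ContractiveSG l S)
    {t u : ℝ} (ht : 0 ≤ t) (hu : 0 ≤ u) (hut : u ≤ t + 1) (f : C(X, ℝ)) :
    ‖S u f - S t f‖ ≤ Real.exp (|l| * (t + 1)) * ‖S |u - t| f - f‖ := by
  rcases le_total t u with htu | hut'
  · rw [hsg.apply_sub_apply ht htu, abs_of_nonneg (sub_nonneg.2 htu)]
    exact hcon.norm_apply_le ht (by linarith) _
  · rw [← norm_sub_rev, hsg.apply_sub_apply hu hut', abs_sub_comm,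
      abs_of_nonneg (sub_nonneg.2 hut')]
    exact hcon.norm_apply_le hu hut _

theorem continuousOn_orbit {l : ℝ} (hsg : IsSemigroupOn S) (hcon : ContractiveSG l S)
    {f : C(X, ℝ)} (hf : Tendsto (fun t => S t f) (𝓝[>] 0) (𝓝 f)) :
    ContinuousOn (fun t => S t f) (Ici 0) := by
  intro t (ht : 0 ≤ t)
  have hf0 : Tendsto (fun s => ‖S s f - f‖) (𝓝[≥] 0) (𝓝 0) := by
    rw [← Ioi_insert, nhdsWithin_insert, tendsto_sup]
    refine ⟨?_, by simpa using (hf.sub_const f).norm⟩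
    simpa [hsg.1] using tendsto_pure_nhds (fun s => ‖S s f - f‖) 0
  have habs : Tendsto (fun u : ℝ => |u - t|) (𝓝 t) (𝓝[≥] 0) :=
    tendsto_nhdsWithin_of_tendsto_nhds_of_eventually_within _
      (by simpa using (continuous_id.sub continuous_const).abs.tendsto' t 0 (by simp))
      (Eventually.of_forall fun u => abs_nonneg (u - t))
  have hbound : ∀ᶠ u in 𝓝[Ici 0] t, ‖S u f - S t f‖ ≤
      Real.exp (|l| * (t + 1)) * ‖S |u - t| f - f‖ := by
    filter_upwards [self_mem_nhdsWithin, nhdsWithin_le_nhds (Iic_mem_nhds (lt_add_one t))]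
      with u (hu : 0 ≤ u) (hut : u ≤ t + 1)
    exact norm_orbit_sub_le hsg hcon ht hu hut f
  rw [ContinuousWithinAt, tendsto_iff_norm_sub_tendsto_zero]
  exact squeeze_zero' (Eventually.of_forall fun _ => norm_nonneg _) hbound
    (by simpa using ((hf0.comp habs).const_mul _).mono_left nhdsWithin_le_nhds)

end Semigroup

theorem statement6_general (l : ℝ) (S : ℝ → C(E, ℝ) →L[ℝ] C(E, ℝ))
    (D : Set C(E, ℝ)) (G : C(E, ℝ) → C(E, ℝ))
    (hsg : IsSemigroupOn S) (hpos : PositiveSG S)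
    (hcon : ContractiveSG l S) (hgen : IsGeneratorOf S D G)
    (h : C(E, ℝ)) (hD : h ∈ D) (hpos' : ∀ x : E, 0 < h x) :
    ∀ t : ℝ, 0 ≤ t → ∀ x : E,
      S t h x ≤ Real.exp (t * ‖ContinuousMap.mk (fun x : E => G h x / h x)
        ((G h).continuous.div h.continuous fun x => (hpos' x).ne')‖) * h x := by
  intro t ht x
  set q : C(E, ℝ) := ContinuousMap.mk (fun x : E => G h x / h x)
    ((G h).continuous.div h.continuous fun x => (hpos' x).ne')
  have hGh : G h ≤ ‖q‖ • h := fun y =>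
    ContinuousMap.apply_le_norm_mul (fun z => (hpos' z).le)
      (fun z => (div_mul_cancel₀ _ (hpos' z).ne').symm) y
  have hquot := hgen.1 h hD
  have hcont := continuousOn_orbit hsg hcon (tendsto_orbit_of_tendsto_difference_quotient hquot)
  have hgronwall := le_mul_exp_of_deriv_right_le (f := fun u => S u h x)
    (f' := fun s => S s (G h) x) (K := ‖q‖) ht
    ((continuous_eval_const x).comp_continuousOn (hcont.mono Icc_subset_Ici_self))
    (fun s hs => (ContinuousMap.evalCLM ℝ x : C(E, ℝ) →L[ℝ] ℝ).hasFDerivAt.comp_hasDerivWithinAt s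
      (hasDerivWithinAt_orbit hsg hquot hs.1))
    (fun s hs => (hpos.monotone hs.1 hGh x).trans_eq (by simp))
  simpa [hsg.1] using hgronwall

/-- From the proof of Lemma 28: if `h ∈ D(G)` with `h > 0`, then
`S t h ≤ exp (t ‖(Gh)/h‖) ⬝ h` pointwise, for all `t ≥ 0`. -/
theorem statement6 (l : ℝ) (S : ℝ → C(E, ℝ) →L[ℝ] C(E, ℝ))
    (D : Set C(E, ℝ)) (G : C(E, ℝ) → C(E, ℝ))
    (hsg : IsSemigroupOn S) (hsc : StronglyContinuousSG S) (hpos : PositiveSG S)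
    (hcon : ContractiveSG l S) (hgen : IsGeneratorOf S D G)
    (h : C(E, ℝ)) (hD : h ∈ D) (hpos' : ∀ x : E, 0 < h x) :
    ∀ t : ℝ, 0 ≤ t → ∀ x : E,
      S t h x ≤ Real.exp (t * ‖ContinuousMap.mk (fun x : E => G h x / h x)
        ((G h).continuous.div h.continuous fun x => (hpos' x).ne')‖) * h x :=
  statement6_general l S D G hsg hpos hcon hgen h hD hpos'
end

section
/- Let λ ∈ ℝ, let S be a strongly continuous, positive, λ-contractive semigroup on C(E) with generator G, and let α, β ∈ C(E) with α ≥ 0. For f ∈ C(E) with f ≥ 0, let U_t f denote the value at time t of the unique mild solution of the Cauchy problem ∂u_t/∂t = G u_t + β u_t − α u_t² with u_0 = f. Then for each t ≥ 0 the map f ↦ U_t f is continuous from {f ∈ C(E) : f ≥ 0} (with the supremum-norm topology) to C(E). -/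
open Filter Topology Set MeasureTheory

variable {E : Type*} [TopologicalSpace E] [CompactSpace E] [TopologicalSpace.MetrizableSpace E] [Nonempty E]

/-!
The difference of two mild solutions satisfies a Duhamel formula in which the reaction term
factors as `(β - α (u + w)) (u - w)`. As long as `w` stays `1`-close to `u`, the first factor is
bounded in terms of a bound for `u` alone, so contractivity and Grönwall's inequality give
`‖w s - u s‖ ≤ B ‖g - f‖` with `B` depending only on `u` and `t`. For `g` close to `f` this is
`< 1`, so a continuity argument keeps `w` in the `1`-neighbourhood of `u` on all of `[0, t]`:
`U t` is locally Lipschitz at every `f ≥ 0`.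
-/

open Real

lemma add_mul_gronwallBound_zero (A K x : ℝ) :
    A + K * gronwallBound 0 K A x = A * exp (K * x) := by
  rcases eq_or_ne K 0 with rfl | hK
  · simp [gronwallBound_K0]
  · rw [gronwallBound_of_K_ne_0 hK]
    field_simp
    ring

theorem le_mul_exp_of_le_add_mul_integral {φ : ℝ → ℝ} {A K T : ℝ} (hK : 0 ≤ K)
    (hφ : ContinuousOn φ (Icc 0 T))
    (h : ∀ s ∈ Icc 0 T, φ s ≤ A + K * ∫ r in (0 : ℝ)..s, φ r) :
    ∀ s ∈ Icc 0 T, φ s ≤ A * exp (K * s) := by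
  intro s hs
  have hT : 0 ≤ T := hs.1.trans hs.2
  -- `ψ` extends `φ|[0,T]` continuously to `ℝ`, so that its primitive is differentiable.
  set ψ := IccExtend hT ((Icc 0 T).domRestrict φ)
  have hψ : Continuous ψ := hφ.domRestrict.Icc_extend'
  have hψφ : ∀ x ∈ Icc 0 T, ψ x = φ x := fun x hx => IccExtend_of_mem hT _ hx
  have hΨφ : ∀ x ∈ Icc 0 T, ∫ r in (0 : ℝ)..x, ψ r = ∫ r in (0 : ℝ)..x, φ r := by
    refine fun x hx => intervalIntegral.integral_congr fun r hr => ?_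
    rw [uIcc_of_le hx.1] at hr
    exact hψφ r ⟨hr.1, hr.2.trans hx.2⟩
  set Φ := fun x => ∫ r in (0 : ℝ)..x, ψ r
  have hΦ : ∀ x, HasDerivAt Φ (ψ x) x := fun x =>
    intervalIntegral.integral_hasDerivAt_right (hψ.intervalIntegrable 0 x)
      (hψ.stronglyMeasurableAtFilter _ _) hψ.continuousAt
  have hΦs : Φ s ≤ gronwallBound 0 K A (s - 0) := by
    refine le_gronwallBound_of_liminf_deriv_right_le (f' := ψ)
      (fun x _ => (hΦ x).continuousAt.continuousWithinAt)
      (fun x _ r hr => (hΦ x).hasDerivWithinAt.liminf_right_slope_le hr)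
      (by simp [Φ]) (fun x hx => ?_) s hs
    have hx : x ∈ Icc 0 T := Ico_subset_Icc_self hx
    simp only [Φ, hψφ x hx, hΨφ x hx]
    linarith [h x hx]
  calc φ s ≤ A + K * Φ s := by simp only [Φ, hΨφ s hs]; exact h s hs
    _ ≤ A + K * gronwallBound 0 K A s := by rw [sub_zero] at hΦs; gcongr
    _ = A * exp (K * s) := add_mul_gronwallBound_zero A K s

theorem forall_lt_of_continuousOn_Icc {d : ℝ → ℝ} {a b c : ℝ} (hd : ContinuousOn d (Icc a b))
    (ha : d a < c) (hstep : ∀ s ∈ Icc a b, (∀ r ∈ Icc a s, d r ≤ c) → d s < c) :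
    ∀ s ∈ Icc a b, d s < c := by
  by_contra! hbad
  set Z := Icc a b ∩ d ⁻¹' Ici c
  have hZ : Z.Nonempty := hbad.imp fun _ ⟨hs, hds⟩ => ⟨hs, hds⟩
  have hZb : BddBelow Z := ⟨a, fun x hx => hx.1.1⟩
  obtain ⟨hs₀, hds₀⟩ : sInf Z ∈ Z :=
    (hd.preimage_isClosed_of_isClosed isClosed_Icc isClosed_Ici).csInf_mem hZ hZb
  have hbefore : ∀ r ∈ Ico a (sInf Z), d r < c := fun r hr =>
    not_le.1 fun hdr => hr.2.not_ge (csInf_le hZb ⟨⟨hr.1, hr.2.le.trans hs₀.2⟩, hdr⟩)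
  have ha₀ : a ≠ sInf Z := by
    rintro h
    exact (h ▸ hds₀ : c ≤ d a).not_gt ha
  have hclosed : IsClosed (Icc a (sInf Z) ∩ d ⁻¹' Iic c) :=
    (hd.mono (Icc_subset_Icc_right hs₀.2)).preimage_isClosed_of_isClosed
      isClosed_Icc isClosed_Iic
  have hupto : Icc a (sInf Z) ⊆ Icc a (sInf Z) ∩ d ⁻¹' Iic c :=
    (closure_Ico ha₀).symm.subset.trans <|
      closure_minimal (fun x hx => ⟨Ico_subset_Icc_self hx, (hbefore x hx).le⟩) hclosed
  exact (hstep _ hs₀ fun r hr => (hupto hr).2).not_ge hds₀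

section Semigroup

variable {X : Type*} [TopologicalSpace X] {S : ℝ → C(X, ℝ) →L[ℝ] C(X, ℝ)} {l : ℝ}

lemma IsSemigroupOn.apply_zero (hsg : IsSemigroupOn S) (f : C(X, ℝ)) : S 0 f = f := by
  rw [hsg.1]
  rfl

lemma IsSemigroupOn.apply_add (hsg : IsSemigroupOn S) {s t : ℝ} (hs : 0 ≤ s) (ht : 0 ≤ t)
    (f : C(X, ℝ)) : S (s + t) f = S s (S t f) := by
  rw [hsg.2 s t hs ht]
  rfl

lemma StronglyContinuousSG.tendsto_nhdsGE_zero (hsc : StronglyContinuousSG S)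
    (hsg : IsSemigroupOn S) (f : C(X, ℝ)) : Tendsto (fun t => S t f) (𝓝[≥] 0) (𝓝 f) := by
  rw [← Ioi_insert, nhdsWithin_insert, tendsto_sup]
  exact ⟨by simpa [hsg.apply_zero] using tendsto_pure_nhds (fun t => S t f) 0, hsc f⟩

variable [CompactSpace X]

lemma ContractiveSG.norm_apply_le_s18 (hcon : ContractiveSG l S) {t T : ℝ} (ht : 0 ≤ t)
    (htT : t ≤ T) (f : C(X, ℝ)) : ‖S t f‖ ≤ exp (|l| * T) * ‖f‖ := by
  refine (hcon t ht f).trans (mul_le_mul_of_nonneg_right (exp_le_exp.2 ?_) (norm_nonneg f))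
  calc l * t ≤ |l| * t := mul_le_mul_of_nonneg_right (le_abs_self l) ht
    _ ≤ |l| * T := mul_le_mul_of_nonneg_left htT (abs_nonneg l)

-- Both cases reduce to `S (min s s₀) (S |s - s₀| f - f)`, up to sign.
lemma IsSemigroupOn.norm_apply_sub_apply_le (hsg : IsSemigroupOn S) (hcon : ContractiveSG l S)
    {s s₀ : ℝ} (hs : 0 ≤ s) (hs₀ : 0 ≤ s₀) (f : C(X, ℝ)) :
    ‖S s f - S s₀ f‖ ≤ exp (|l| * s₀) * ‖S |s - s₀| f - f‖ := by
  rcases le_total s s₀ with h | h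
  · have hsplit : S s₀ f = S s (S (s₀ - s) f) := by
      rw [← hsg.apply_add hs (sub_nonneg.2 h), add_sub_cancel]
    rw [hsplit, ← map_sub, abs_sub_comm, abs_of_nonneg (sub_nonneg.2 h), norm_sub_rev (S _ f)]
    exact hcon.norm_apply_le_s18 hs h _
  · have hsplit : S s f = S s₀ (S (s - s₀) f) := by
      rw [← hsg.apply_add hs₀ (sub_nonneg.2 h), add_sub_cancel]
    rw [hsplit, ← map_sub, abs_of_nonneg (sub_nonneg.2 h)]
    exact hcon.norm_apply_le_s18 hs₀ le_rfl _

lemma StronglyContinuousSG.continuousOn_apply (hsc : StronglyContinuousSG S)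
    (hsg : IsSemigroupOn S) (hcon : ContractiveSG l S) (f : C(X, ℝ)) :
    ContinuousOn (fun t => S t f) (Ici 0) := by
  intro s₀ hs₀
  have hdist : Tendsto (fun s => |s - s₀|) (𝓝 s₀) (𝓝[≥] 0) := by
    refine tendsto_nhdsWithin_of_tendsto_nhds_of_eventually_within _ ?_
      (Eventually.of_forall fun s => mem_Ici.2 (abs_nonneg _))
    simpa using (continuous_id.sub continuous_const).abs.tendsto s₀ (f := fun s : ℝ => |s - s₀|)
  have hlim : Tendsto (fun s => exp (|l| * s₀) * ‖S |s - s₀| f - f‖) (𝓝[Ici 0] s₀) (𝓝 0) := by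
    simpa using ((((hsc.tendsto_nhdsGE_zero hsg f).comp hdist).sub_const f).norm.const_mul
      (exp (|l| * s₀))).mono_left nhdsWithin_le_nhds
  refine tendsto_iff_norm_sub_tendsto_zero.2 <|
    squeeze_zero' (Eventually.of_forall fun _ => norm_nonneg _) ?_ hlim
  filter_upwards [self_mem_nhdsWithin] with s hs using hsg.norm_apply_sub_apply_le hcon hs hs₀ f

lemma StronglyContinuousSG.continuousOn_uncurry (hsc : StronglyContinuousSG S)
    (hsg : IsSemigroupOn S) (hcon : ContractiveSG l S) :
    ContinuousOn (fun p : ℝ × C(X, ℝ) => S p.1 p.2) (Ici 0 ×ˢ univ) := by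
  rintro ⟨s₀, f₀⟩ ⟨hs₀, -⟩
  have horbit : ContinuousWithinAt (fun p : ℝ × C(X, ℝ) => S p.1 f₀) (Ici 0 ×ˢ univ) (s₀, f₀) :=
    (hsc.continuousOn_apply hsg hcon f₀).comp continuousOn_fst (fun _ hp => hp.1) _
      ⟨hs₀, trivial⟩
  have hlim : Tendsto (fun p : ℝ × C(X, ℝ) => exp (|l| * (s₀ + 1)) * ‖p.2 - f₀‖)
      (𝓝[Ici 0 ×ˢ univ] (s₀, f₀)) (𝓝 0) := by
    simpa using (((continuous_snd.sub (continuous_const (y := f₀))).norm.const_mul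
      (exp (|l| * (s₀ + 1)))).tendsto (s₀, f₀)).mono_left nhdsWithin_le_nhds
  have hperturb : Tendsto (fun p : ℝ × C(X, ℝ) => S p.1 (p.2 - f₀))
      (𝓝[Ici 0 ×ˢ univ] (s₀, f₀)) (𝓝 0) := by
    refine squeeze_zero_norm' ?_ hlim
    have hnear : ∀ᶠ p : ℝ × C(X, ℝ) in 𝓝 (s₀, f₀), p.1 ≤ s₀ + 1 :=
      continuous_fst.continuousAt.eventually (eventually_le_nhds (lt_add_one s₀))
    filter_upwards [self_mem_nhdsWithin, nhdsWithin_le_nhds hnear] with p hp hp'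
    exact hcon.norm_apply_le_s18 hp.1 hp' _
  simpa [ContinuousWithinAt, ← map_add] using hperturb.add horbit

lemma StronglyContinuousSG.continuousOn_apply_sub (hsc : StronglyContinuousSG S)
    (hsg : IsSemigroupOn S) (hcon : ContractiveSG l S) {h : ℝ → C(X, ℝ)} {r : ℝ}
    (hh : ContinuousOn h (Icc 0 r)) : ContinuousOn (fun τ => S (r - τ) (h τ)) (Icc 0 r) :=
  (hsc.continuousOn_uncurry hsg hcon).comp ((continuousOn_const.sub continuousOn_id).prodMk hh)
    fun _ hτ => ⟨sub_nonneg.2 hτ.2, trivial⟩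

lemma ContractiveSG.norm_integral_apply_sub_le (hcon : ContractiveSG l S) {h : ℝ → C(X, ℝ)}
    {r T : ℝ} (hh : ContinuousOn h (Icc 0 r)) (hr : 0 ≤ r) (hrT : r ≤ T) :
    ‖∫ τ in (0 : ℝ)..r, S (r - τ) (h τ)‖ ≤ exp (|l| * T) * ∫ τ in (0 : ℝ)..r, ‖h τ‖ := by
  rw [← intervalIntegral.integral_const_mul]
  refine intervalIntegral.norm_integral_le_of_norm_le hr (ae_of_all _ fun τ hτ => ?_)
    ((continuousOn_const.mul hh.norm).intervalIntegrable_of_Icc hr)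
  exact hcon.norm_apply_le_s18 (sub_nonneg.2 hτ.2) (by linarith [hτ.1]) _

end Semigroup

namespace IsMildSolution

variable {X : Type*} [TopologicalSpace X] [CompactSpace X] {S : ℝ → C(X, ℝ) →L[ℝ] C(X, ℝ)}
  {l : ℝ} {a b f g : C(X, ℝ)} {u w : ℝ → C(X, ℝ)}

lemma apply_zero (hsg : IsSemigroupOn S) (hu : IsMildSolution S a b f u) : u 0 = f := by
  simpa [hsg.apply_zero] using hu.2 0 le_rfl

lemma continuousOn_reaction (hu : IsMildSolution S a b f u) :
    ContinuousOn (fun τ => b * u τ - a * u τ ^ 2) (Ici 0) :=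
  (continuousOn_const.mul hu.1).sub (continuousOn_const.mul (hu.1.pow 2))

lemma sub_eq (hsc : StronglyContinuousSG S) (hsg : IsSemigroupOn S) (hcon : ContractiveSG l S)
    (hu : IsMildSolution S a b f u) (hw : IsMildSolution S a b g w) {r : ℝ} (hr : 0 ≤ r) :
    u r - w r =
      S r (f - g) + ∫ τ in (0 : ℝ)..r, S (r - τ) ((b - a * (u τ + w τ)) * (u τ - w τ)) := by
  have hint : ∀ {v : ℝ → C(X, ℝ)} {h : C(X, ℝ)}, IsMildSolution S a b h v →
      IntervalIntegrable (fun τ => S (r - τ) (b * v τ - a * v τ ^ 2)) volume 0 r := fun hv =>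
    (hsc.continuousOn_apply_sub hsg hcon (hv.continuousOn_reaction.mono Icc_subset_Ici_self)
      ).intervalIntegrable_of_Icc hr
  rw [hu.2 r hr, hw.2 r hr, map_sub, add_sub_add_comm,
    ← intervalIntegral.integral_sub (hint hu) (hint hw)]
  congr 1
  refine intervalIntegral.integral_congr fun τ _ => ?_
  simp only [← map_sub]
  congr 1
  ring

lemma norm_sub_le_integral (hsc : StronglyContinuousSG S) (hsg : IsSemigroupOn S)
    (hcon : ContractiveSG l S) (hu : IsMildSolution S a b f u) (hw : IsMildSolution S a b g w)
    {r T ρ : ℝ} (hr : 0 ≤ r) (hrT : r ≤ T) (hρ : ∀ τ ∈ Icc 0 r, ‖u τ + w τ‖ ≤ ρ) :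
    ‖u r - w r‖ ≤ exp (|l| * T) * ‖f - g‖ +
      exp (|l| * T) * (‖b‖ + ‖a‖ * ρ) * ∫ τ in (0 : ℝ)..r, ‖u τ - w τ‖ := by
  have hcont : ContinuousOn (fun τ => u τ - w τ) (Icc 0 r) :=
    (hu.1.sub hw.1).mono Icc_subset_Ici_self
  have hprod : ContinuousOn (fun τ => (b - a * (u τ + w τ)) * (u τ - w τ)) (Icc 0 r) :=
    (continuousOn_const.sub (continuousOn_const.mul
      ((hu.1.add hw.1).mono Icc_subset_Ici_self))).mul hcont
  have hlip : ∀ τ ∈ Icc 0 r,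
      ‖(b - a * (u τ + w τ)) * (u τ - w τ)‖ ≤ (‖b‖ + ‖a‖ * ρ) * ‖u τ - w τ‖ := fun τ hτ =>
    (norm_mul_le _ _).trans <| by
      gcongr
      exact (norm_sub_le _ _).trans (by grw [norm_mul_le, hρ τ hτ])
  calc ‖u r - w r‖
      ≤ ‖S r (f - g)‖ + ‖∫ τ in (0 : ℝ)..r, S (r - τ) ((b - a * (u τ + w τ)) * (u τ - w τ))‖ := by
        rw [hu.sub_eq hsc hsg hcon hw hr]
        exact norm_add_le _ _
    _ ≤ exp (|l| * T) * ‖f - g‖ +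
        exp (|l| * T) * ∫ τ in (0 : ℝ)..r, ‖(b - a * (u τ + w τ)) * (u τ - w τ)‖ := by
        gcongr
        · exact hcon.norm_apply_le_s18 hr hrT _
        · exact hcon.norm_integral_apply_sub_le hprod hr hrT
    _ ≤ exp (|l| * T) * ‖f - g‖ +
        exp (|l| * T) * ∫ τ in (0 : ℝ)..r, (‖b‖ + ‖a‖ * ρ) * ‖u τ - w τ‖ := by
        gcongr
        exact intervalIntegral.integral_mono_on hr (hprod.norm.intervalIntegrable_of_Icc hr)
          ((continuousOn_const.mul hcont.norm).intervalIntegrable_of_Icc hr) hlip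
    _ = _ := by rw [intervalIntegral.integral_const_mul]; ring

lemma norm_sub_le_of_norm_add_le (hsc : StronglyContinuousSG S) (hsg : IsSemigroupOn S)
    (hcon : ContractiveSG l S) (hu : IsMildSolution S a b f u) (hw : IsMildSolution S a b g w)
    {s T ρ : ℝ} (hs : 0 ≤ s) (hsT : s ≤ T) (hρ : ∀ τ ∈ Icc 0 s, ‖u τ + w τ‖ ≤ ρ) :
    ‖u s - w s‖ ≤ exp (|l| * T) * exp (exp (|l| * T) * (‖b‖ + ‖a‖ * ρ) * T) * ‖f - g‖ := by
  have hρ₀ : 0 ≤ ρ := (norm_nonneg _).trans (hρ 0 ⟨le_rfl, hs⟩)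
  have hgronwall := le_mul_exp_of_le_add_mul_integral (φ := fun τ => ‖u τ - w τ‖)
    (by positivity) ((hu.1.sub hw.1).norm.mono Icc_subset_Ici_self)
    (fun r hr => hu.norm_sub_le_integral hsc hsg hcon hw hr.1 (hr.2.trans hsT)
      fun τ hτ => hρ τ ⟨hτ.1, hτ.2.trans hr.2⟩) s ⟨hs, le_rfl⟩
  calc ‖u s - w s‖
      ≤ exp (|l| * T) * ‖f - g‖ * exp (exp (|l| * T) * (‖b‖ + ‖a‖ * ρ) * s) := hgronwall
    _ ≤ exp (|l| * T) * ‖f - g‖ * exp (exp (|l| * T) * (‖b‖ + ‖a‖ * ρ) * T) := by gcongr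
    _ = _ := by ring

theorem exists_eventually_norm_sub_le (hsc : StronglyContinuousSG S) (hsg : IsSemigroupOn S)
    (hcon : ContractiveSG l S) (hu : IsMildSolution S a b f u) {t : ℝ} (ht : 0 ≤ t) :
    ∃ B, ∀ᶠ g in 𝓝 f, ∀ w, IsMildSolution S a b g w → ‖w t - u t‖ ≤ B * ‖g - f‖ := by
  obtain ⟨M, hM⟩ :=
    (isCompact_Icc (a := 0) (b := t)).exists_bound_of_continuousOn
      (hu.1.mono Icc_subset_Ici_self)
  set B := exp (|l| * t) * exp (exp (|l| * t) * (‖b‖ + ‖a‖ * (1 + 2 * M)) * t)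
  have hB : 0 ≤ B := by positivity
  refine ⟨B, ?_⟩
  filter_upwards [Metric.ball_mem_nhds f (inv_pos.2 (add_pos_of_nonneg_of_pos hB one_pos))]
    with g hg w hw
  rw [Metric.mem_ball, dist_eq_norm] at hg
  have hBg : B * ‖g - f‖ < 1 := by
    have h := mul_lt_mul_of_pos_right hg (add_pos_of_nonneg_of_pos hB one_pos)
    rw [inv_mul_cancel₀ (by positivity)] at h
    nlinarith [norm_nonneg (g - f)]
  have hstable : ∀ s ∈ Icc 0 t, (∀ r ∈ Icc 0 s, ‖w r - u r‖ ≤ 1) →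
      ‖w s - u s‖ ≤ B * ‖g - f‖ := fun s hs hclose =>
    hw.norm_sub_le_of_norm_add_le hsc hsg hcon hu hs.1 hs.2 fun τ hτ => by
      have hτt : τ ∈ Icc 0 t := ⟨hτ.1, hτ.2.trans hs.2⟩
      calc ‖w τ + u τ‖ = ‖(w τ - u τ) + (u τ + u τ)‖ := by congr 1; abel
        _ ≤ 1 + 2 * M := by
          grw [norm_add_le, norm_add_le, hclose τ hτ, hM τ hτt]
          linarith
  have hclose := forall_lt_of_continuousOn_Icc (a := 0) (b := t) (c := 1)
    ((hw.1.sub hu.1).norm.mono Icc_subset_Ici_self)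
    (by
      rw [Pi.sub_apply, hw.apply_zero hsg, hu.apply_zero hsg]
      exact hg.trans_le (inv_le_one_of_one_le₀ (by linarith)))
    (fun s hs h => (hstable s hs h).trans_lt hBg)
  exact hstable t ⟨ht, le_rfl⟩ fun r hr => (hclose r hr).le

end IsMildSolution

theorem statement18_general (l : ℝ) (S : ℝ → C(E, ℝ) →L[ℝ] C(E, ℝ))
    (hsg : IsSemigroupOn S) (hsc : StronglyContinuousSG S)
    (hcon : ContractiveSG l S)
    (α β : C(E, ℝ))
    (U : ℝ → C(E, ℝ) → C(E, ℝ))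
    (hU : ∀ f : C(E, ℝ), 0 ≤ f → IsMildSolution S α β f (fun t => U t f)) :
    ∀ t : ℝ, 0 ≤ t →
      ContinuousOn (fun f => U t f) {f : C(E, ℝ) | 0 ≤ f} := by
  intro t ht f hf
  obtain ⟨B, hB⟩ := (hU f hf).exists_eventually_norm_sub_le hsc hsg hcon ht
  have hlim : Tendsto (fun g => B * ‖g - f‖) (𝓝[{g | 0 ≤ g}] f) (𝓝 0) := by
    simpa using ((continuous_id.sub (continuous_const (y := f))).norm.const_mul B).tendsto f
      |>.mono_left nhdsWithin_le_nhds
  refine tendsto_iff_norm_sub_tendsto_zero.2 <|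
    squeeze_zero' (Eventually.of_forall fun _ => norm_nonneg _) ?_ hlim
  filter_upwards [self_mem_nhdsWithin, nhdsWithin_le_nhds hB] with g hg hBg
  exact hBg (fun s => U s g) (hU g hg)

/-- Part of Lemma 26: the solution operators `U t` of `∂u/∂t = G u + β u - α u²` are
continuous on the nonnegative cone of `C(E)`: if `U t f` denotes the value at time `t` of the
unique mild solution with `u 0 = f ≥ 0`, then for each `t ≥ 0` the map `f ↦ U t f` is
continuous on `{f : f ≥ 0}` in the supremum norm. -/
theorem statement18 (l : ℝ) (S : ℝ → C(E, ℝ) →L[ℝ] C(E, ℝ))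
    (D : Set C(E, ℝ)) (G : C(E, ℝ) → C(E, ℝ))
    (hsg : IsSemigroupOn S) (hsc : StronglyContinuousSG S) (hpos : PositiveSG S)
    (hcon : ContractiveSG l S) (hgen : IsGeneratorOf S D G)
    (α β : C(E, ℝ)) (hα : 0 ≤ α)
    (U : ℝ → C(E, ℝ) → C(E, ℝ))
    (hU : ∀ f : C(E, ℝ), 0 ≤ f → IsMildSolution S α β f (fun t => U t f)) :
    ∀ t : ℝ, 0 ≤ t →
      ContinuousOn (fun f => U t f) {f : C(E, ℝ) | 0 ≤ f} :=
  statement18_general l S hsg hsc hcon α β U hU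
end
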